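/- arXiv:math/0310093 — 2 statements merged into one kernel-verified Lean document; each statement's English description precedes it below -/
import Mathlib

section
/- Let f : Q → ℝ be a function on a cube Q ⊂ ℝ^{d−1} of side a with Hölder seminorm |f|_α ≤ L for some α ∈ (0,1]. Let V_δ(f, Q) denote the maximal number of pairwise disjoint open subcubes Q(i) ⊂ Q with Osc(f, Q(i)) ≥ δ. Then for every δ > 0, V_{δ/2}(f, Q) ≤ d^{(d−1)/2}·a^{d−1}·L^{(d−1)/α}·δ^{(1−d)/α} + 1. -/
open MeasureTheory Real

/-- The open cube in `ℝ^n` with lower corner `z` and side `c`, edges parallel to the axes. -/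
def openCube (n : ℕ) (z : EuclideanSpace ℝ (Fin n)) (c : ℝ) : Set (EuclideanSpace ℝ (Fin n)) :=
  {x | ∀ i, z i < x i ∧ x i < z i + c}

/-- There exist `N` pairwise disjoint open subcubes of `Q` on each of which the oscillation of
`f` is at least `δ` (i.e. `sup − inf ≥ 2δ`). -/
def OscFamily (n : ℕ) (f : EuclideanSpace ℝ (Fin n) → ℝ)
    (Q : Set (EuclideanSpace ℝ (Fin n))) (δ : ℝ) (N : ℕ) : Prop :=
  ∃ (z : Fin N → EuclideanSpace ℝ (Fin n)) (c : Fin N → ℝ),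
    (∀ i, 0 < c i) ∧ (∀ i, openCube n (z i) (c i) ⊆ Q) ∧
    (Pairwise fun i j => Disjoint (openCube n (z i) (c i)) (openCube n (z j) (c j))) ∧
    ∀ i, 2 * δ ≤ sSup (f '' openCube n (z i) (c i)) - sInf (f '' openCube n (z i) (c i))

/-- `V_δ(f,Q)`: the maximal number of pairwise disjoint open subcubes of `Q` with oscillation of
`f` at least `δ`; equal to `1` when no such cube exists (in particular when `Osc(f,Q) < δ`). -/
noncomputable def oscCount (n : ℕ) (f : EuclideanSpace ℝ (Fin n) → ℝ)
    (Q : Set (EuclideanSpace ℝ (Fin n))) (δ : ℝ) : ℕ :=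
  max 1 (sSup {N : ℕ | OscFamily n f Q δ N})


lemma openCube_eq (n : ℕ) (z : EuclideanSpace ℝ (Fin n)) (c : ℝ) :
    openCube n z c = ((MeasurableEquiv.toLp 2 (Fin n → ℝ)).symm) ⁻¹'
      (Set.univ.pi fun i => Set.Ioo (z i) (z i + c)) := by
  ext x
  simp [openCube, Set.mem_pi, MeasurableEquiv.coe_toLp_symm]

lemma openCube_measurable (n : ℕ) (z : EuclideanSpace ℝ (Fin n)) (c : ℝ) :
    MeasurableSet (openCube n z c) := by
  rw [openCube_eq]
  exact (MeasurableEquiv.toLp 2 (Fin n → ℝ)).symm.measurable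
    (MeasurableSet.univ_pi fun i => measurableSet_Ioo)

lemma volume_openCube (n : ℕ) (z : EuclideanSpace ℝ (Fin n)) (c : ℝ) (hc : 0 ≤ c) :
    volume (openCube n z c) = ENNReal.ofReal (c ^ n) := by
  rw [openCube_eq,
    (EuclideanSpace.volume_preserving_symm_measurableEquiv_toLp (Fin n)).measure_preimage
      (MeasurableSet.univ_pi fun i => measurableSet_Ioo).nullMeasurableSet]
  rw [ENNReal.ofReal_pow hc]
  rw [volume_pi_pi]
  simp [Real.volume_Ioo]

lemma dist_le_openCube {n : ℕ} {w : EuclideanSpace ℝ (Fin n)} {c : ℝ} (hc : 0 ≤ c)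
    {x y : EuclideanSpace ℝ (Fin n)} (hx : x ∈ openCube n w c) (hy : y ∈ openCube n w c) :
    dist x y ≤ c * Real.sqrt n := by
  rw [EuclideanSpace.dist_eq]
  have h1 : ∑ i, dist (x i) (y i) ^ 2 ≤ (n : ℝ) * c ^ 2 := by
    calc ∑ i, dist (x i) (y i) ^ 2 ≤ ∑ _i : Fin n, c ^ 2 := by
          apply Finset.sum_le_sum
          intro i _
          have hxi := hx i; have hyi := hy i
          have : dist (x i) (y i) ≤ c := by
            rw [Real.dist_eq, abs_le]; constructor <;> nlinarith [hxi.1, hxi.2, hyi.1, hyi.2]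
          exact pow_le_pow_left₀ dist_nonneg this 2
      _ = (n : ℝ) * c ^ 2 := by simp [mul_comm]
  calc √(∑ i, dist (x i) (y i) ^ 2) ≤ √((n : ℝ) * c ^ 2) := Real.sqrt_le_sqrt h1
    _ = c * √n := by
        rw [Real.sqrt_mul (by positivity), Real.sqrt_sq hc, mul_comm]

lemma osc_le {n : ℕ} {C : Set (EuclideanSpace ℝ (Fin n))} {f : EuclideanSpace ℝ (Fin n) → ℝ}
    {B : ℝ} (hne : C.Nonempty) (h : ∀ x ∈ C, ∀ y ∈ C, |f x - f y| ≤ B) :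
    sSup (f '' C) - sInf (f '' C) ≤ B := by
  rw [sub_le_iff_le_add]
  apply csSup_le (hne.image f)
  rintro _ ⟨x, hx, rfl⟩
  rw [← sub_le_iff_le_add']
  apply le_csInf (hne.image f)
  rintro _ ⟨y, hy, rfl⟩
  have := h x hx y hy
  rw [abs_le] at this; linarith [this.1, this.2]

/-- Volume count: for an oscillation family at level `δ/2`, the total volume of the cubes,
each of side at least `(δ/L)^(1/α)/√n`, is at most `a^n`. -/
lemma oscFamily_vol_le {n : ℕ} (hn : 1 ≤ n) {f : EuclideanSpace ℝ (Fin n) → ℝ}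
    {α L a δ : ℝ} (hα : 0 < α) (hL : 0 < L) (ha : 0 < a) (hδ : 0 < δ)
    (z : EuclideanSpace ℝ (Fin n))
    (hf : ∀ x ∈ openCube n z a, ∀ y ∈ openCube n z a, |f x - f y| ≤ L * dist x y ^ α)
    {N : ℕ} (h : OscFamily n f (openCube n z a) (δ / 2) N) :
    (N : ℝ) * ((δ / L) ^ (α⁻¹) / Real.sqrt n) ^ n ≤ a ^ n := by
  obtain ⟨w, c, hc, hsub, hdisj, hosc⟩ := h
  have hn' : (0 : ℝ) < n := by exact_mod_cast Nat.lt_of_lt_of_le Nat.zero_lt_one hn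
  have hδL : (0 : ℝ) < δ / L := div_pos hδ hL
  have h1 : (0 : ℝ) < (δ / L) ^ (α⁻¹) := Real.rpow_pos_of_pos hδL _
  have h2 : (0 : ℝ) < √(n : ℝ) := Real.sqrt_pos.2 hn'
  set c₀ : ℝ := (δ / L) ^ (α⁻¹) / √(n : ℝ) with hc₀def
  have hc₀ : 0 < c₀ := div_pos h1 h2
  -- each cube has side at least c₀
  have hstep : ∀ i, c₀ ≤ c i := by
    intro i
    have hci := hc i
    -- a point of the cube
    have hne : (openCube n (w i) (c i)).Nonempty := by
      refine ⟨WithLp.toLp 2 (fun j => w i j + c i / 2 : Fin n → ℝ), fun j => ?_⟩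
      constructor <;> [skip; skip] <;> simp <;> linarith
    have hB : sSup (f '' openCube n (w i) (c i)) - sInf (f '' openCube n (w i) (c i))
        ≤ L * (c i * √(n : ℝ)) ^ α := by
      apply osc_le hne
      intro x hx y hy
      refine (hf x (hsub i hx) y (hsub i hy)).trans ?_
      have := Real.rpow_le_rpow dist_nonneg (dist_le_openCube hci.le hx hy) hα.le
      exact mul_le_mul_of_nonneg_left this hL.le
    have hδle : δ ≤ L * (c i * √(n : ℝ)) ^ α := by
      have := hosc i; linarith
    have h3 : δ / L ≤ (c i * √(n : ℝ)) ^ α := (div_le_iff₀' hL).2 hδle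
    have h4 : (δ / L) ^ (α⁻¹) ≤ c i * √(n : ℝ) := by
      have := Real.rpow_le_rpow hδL.le h3 (inv_nonneg.2 hα.le)
      rwa [Real.rpow_rpow_inv (by positivity) hα.ne'] at this
    rw [hc₀def, div_le_iff₀ h2]
    linarith
  -- volume comparison
  have hmeas : ∀ i : Fin N, MeasurableSet (openCube n (w i) (c i)) :=
    fun i => openCube_measurable n (w i) (c i)
  have hvol : (N : ENNReal) * ENNReal.ofReal (c₀ ^ n) ≤ ENNReal.ofReal (a ^ n) := by
    calc (N : ENNReal) * ENNReal.ofReal (c₀ ^ n)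
        = ∑ _i : Fin N, ENNReal.ofReal (c₀ ^ n) := by
          simp [Finset.sum_const, mul_comm]
      _ ≤ ∑ i : Fin N, volume (openCube n (w i) (c i)) := by
          apply Finset.sum_le_sum
          intro i _
          rw [volume_openCube n (w i) (c i) (hc i).le]
          exact ENNReal.ofReal_le_ofReal (pow_le_pow_left₀ hc₀.le (hstep i) n)
      _ = ∑' i : Fin N, volume (openCube n (w i) (c i)) := (tsum_fintype _).symm
      _ = volume (⋃ i, openCube n (w i) (c i)) := (measure_iUnion hdisj hmeas).symm
      _ ≤ volume (openCube n z a) := measure_mono (Set.iUnion_subset hsub)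
      _ = ENNReal.ofReal (a ^ n) := volume_openCube n z a ha.le
  rw [← ENNReal.ofReal_natCast N, ← ENNReal.ofReal_mul (by positivity)] at hvol
  exact (ENNReal.ofReal_le_ofReal_iff (by positivity)).1 hvol

lemma arith_bound {n : ℕ} (hn : 1 ≤ n) {α L a δ N : ℝ} (hα : 0 < α) (hL : 0 < L)
    (ha : 0 < a) (hδ : 0 < δ) (hN : 0 ≤ N)
    (h : N * ((δ / L) ^ (α⁻¹) / Real.sqrt n) ^ n ≤ a ^ n) :
    N ≤ ((n : ℝ) + 1) ^ ((n : ℝ) / 2) * a ^ n * L ^ ((n : ℝ) / α) * δ ^ (-((n : ℝ) / α)) := by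
  have hn' : (0 : ℝ) < n := by exact_mod_cast Nat.lt_of_lt_of_le Nat.zero_lt_one hn
  have hδL : (0 : ℝ) < δ / L := div_pos hδ hL
  have h1 : (0 : ℝ) < (δ / L) ^ (α⁻¹) := Real.rpow_pos_of_pos hδL _
  have h2 : (0 : ℝ) < √(n : ℝ) := Real.sqrt_pos.2 hn'
  have hc₀n : (0 : ℝ) < ((δ / L) ^ (α⁻¹) / √(n : ℝ)) ^ n := by positivity
  have hNle : N ≤ a ^ n / ((δ / L) ^ (α⁻¹) / √(n : ℝ)) ^ n := (le_div_iff₀ hc₀n).2 h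
  have he : ((δ / L) ^ (α⁻¹)) ^ n = (δ / L) ^ ((n : ℝ) / α) := by
    rw [← Real.rpow_natCast ((δ / L) ^ (α⁻¹)) n, ← Real.rpow_mul hδL.le,
      inv_mul_eq_div]
  have hs : (√(n : ℝ)) ^ n = (n : ℝ) ^ ((n : ℝ) / 2) := by
    rw [← Real.rpow_natCast (√(n : ℝ)) n, Real.sqrt_eq_rpow, ← Real.rpow_mul hn'.le,
      show (1 / 2 : ℝ) * (n : ℝ) = (n : ℝ) / 2 from by ring]
  rw [div_pow, he, hs] at hNle
  rw [div_div_eq_mul_div] at hNle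
  refine hNle.trans ?_
  rw [Real.div_rpow hδ.le hL.le, Real.rpow_neg hδ.le, div_div_eq_mul_div, ← div_eq_mul_inv]
  rw [div_le_div_iff_of_pos_right (Real.rpow_pos_of_pos hδ _)]
  calc a ^ n * (n : ℝ) ^ ((n : ℝ) / 2) * L ^ ((n : ℝ) / α)
      = (n : ℝ) ^ ((n : ℝ) / 2) * (a ^ n * L ^ ((n : ℝ) / α)) := by ring
    _ ≤ ((n : ℝ) + 1) ^ ((n : ℝ) / 2) * (a ^ n * L ^ ((n : ℝ) / α)) := by
        apply mul_le_mul_of_nonneg_right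
        · exact Real.rpow_le_rpow hn'.le (by linarith) (by positivity)
        · positivity
    _ = ((n : ℝ) + 1) ^ ((n : ℝ) / 2) * a ^ n * L ^ ((n : ℝ) / α) := by ring

/-- for `f` `α`-Hölder with seminorm bound `L` on a cube `Q` of side `a` in
`ℝ^{d-1}`, `V_{δ/2}(f, Q) ≤ d^{(d−1)/2}·a^{d−1}·L^{(d−1)/α}·δ^{(1−d)/α} + 1`. -/
theorem oscCount_le_of_holder (d : ℕ) (hd : 2 ≤ d)
    (f : EuclideanSpace ℝ (Fin (d - 1)) → ℝ) (α L a δ : ℝ)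
    (hα : 0 < α) (hα1 : α ≤ 1) (hL : 0 < L) (ha : 0 < a) (hδ : 0 < δ)
    (z : EuclideanSpace ℝ (Fin (d - 1)))
    (hf : ∀ x ∈ openCube (d - 1) z a, ∀ y ∈ openCube (d - 1) z a,
      |f x - f y| ≤ L * dist x y ^ α) :
    (oscCount (d - 1) f (openCube (d - 1) z a) (δ / 2) : ℝ)
      ≤ (d : ℝ) ^ (((d : ℝ) - 1) / 2) * a ^ (d - 1) * L ^ (((d : ℝ) - 1) / α)
          * δ ^ ((1 - (d : ℝ)) / α) + 1 := by
  have hn : 1 ≤ d - 1 := by omega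
  have hcast : ((d - 1 : ℕ) : ℝ) = (d : ℝ) - 1 := by
    push_cast [Nat.cast_sub (by omega : 1 ≤ d)]; ring
  have hd' : (((d - 1 : ℕ) : ℝ) + 1) = (d : ℝ) := by rw [hcast]; ring
  set R : ℝ := (d : ℝ) ^ (((d : ℝ) - 1) / 2) * a ^ (d - 1) * L ^ (((d : ℝ) - 1) / α)
      * δ ^ ((1 - (d : ℝ)) / α) with hRdef
  have hdpos : (0 : ℝ) < d := by positivity
  have hR : 0 < R := by
    rw [hRdef]
    have := Real.rpow_pos_of_pos hdpos (((d : ℝ) - 1) / 2)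
    have := Real.rpow_pos_of_pos hL (((d : ℝ) - 1) / α)
    have := Real.rpow_pos_of_pos hδ ((1 - (d : ℝ)) / α)
    positivity
  have key : ∀ N : ℕ, OscFamily (d - 1) f (openCube (d - 1) z a) (δ / 2) N → (N : ℝ) ≤ R := by
    intro N hfam
    have hvol := oscFamily_vol_le hn hα hL ha hδ z hf hfam
    have := arith_bound hn hα hL ha hδ (Nat.cast_nonneg N) hvol
    rw [hRdef]
    refine this.trans (le_of_eq ?_)
    rw [hd', hcast, show (1 - (d : ℝ)) / α = -(((d : ℝ) - 1) / α) from by ring]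
  have hS0 : (0 : ℕ) ∈ {N : ℕ | OscFamily (d - 1) f (openCube (d - 1) z a) (δ / 2) N} := by
    exact ⟨Fin.elim0, Fin.elim0, fun i => i.elim0, fun i => i.elim0,
      fun i => i.elim0, fun i => i.elim0⟩
  have hsup : sSup {N : ℕ | OscFamily (d - 1) f (openCube (d - 1) z a) (δ / 2) N} ≤ ⌊R⌋₊ := by
    apply csSup_le ⟨0, hS0⟩
    intro N hN
    exact Nat.le_floor (key N hN)
  have hfin : (oscCount (d - 1) f (openCube (d - 1) z a) (δ / 2) : ℝ) ≤ R + 1 := by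
    rw [oscCount]
    push_cast [Nat.cast_max]
    apply max_le
    · linarith
    · have : ((sSup {N : ℕ | OscFamily (d - 1) f (openCube (d - 1) z a) (δ / 2) N} : ℕ) : ℝ)
          ≤ (⌊R⌋₊ : ℝ) := by exact_mod_cast hsup
      have := Nat.floor_le hR.le
      linarith
  exact hfin
end

section
/- Let a₁, …, a_N > 0 with 1/2 ≤ a_j/a_k ≤ 2 for all j, k. Then every rectangle P = (0,a₁)×⋯×(0,a_n) in ℝ^n can be written as the union of closures of a finite family of open cubes {Q(x)}_{x∈X} contained in P with edges parallel to the axes, such that #X ≤ 2^n and the covering multiplicity ℵ{Q(x)} ≤ 2^n. -/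
/-!
Let `c` be the shortest edge of `P`. Since every edge `a_j` lies in `[c, 2c]`, the two intervals
`(0, c)` and `(a_j - c, a_j)` lie in `(0, a_j)` and their closures cover `[0, a_j]`. Taking one of
the two intervals in each coordinate gives `2^n` cubes of edge `c` whose closures cover the closure
of `P`; with at most `2^n` cubes the covering multiplicity is at most `2^n` as well.
-/

open Set

/-- The open cube in `ℝ^n` (as `Fin n → ℝ`) with lower corner `z` and side `c`. -/
def openCubePi (n : ℕ) (z : Fin n → ℝ) (c : ℝ) : Set (Fin n → ℝ) :=
  {x | ∀ i, z i < x i ∧ x i < z i + c}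

lemma openCubePi_eq_pi (n : ℕ) (z : Fin n → ℝ) (c : ℝ) :
    openCubePi n z c = univ.pi fun j => Ioo (z j) (z j + c) := by
  ext x
  simp [openCubePi, mem_pi]

lemma closure_openCubePi (n : ℕ) (z : Fin n → ℝ) {c : ℝ} (hc : 0 < c) :
    closure (openCubePi n z c) = univ.pi fun j => Icc (z j) (z j + c) := by
  rw [openCubePi_eq_pi, closure_pi_set]
  exact pi_congr rfl fun j _ => closure_Ioo (by linarith)

lemma setOf_forall_pos_lt_eq_pi {ι : Type*} (a : ι → ℝ) :
    {x : ι → ℝ | ∀ j, 0 < x j ∧ x j < a j} = univ.pi fun j => Ioo 0 (a j) := by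
  ext x
  simp [mem_pi]

lemma closure_setOf_forall_pos_lt {ι : Type*} [Finite ι] {a : ι → ℝ} (ha : ∀ j, 0 < a j) :
    closure {x : ι → ℝ | ∀ j, 0 < x j ∧ x j < a j} = univ.pi fun j => Icc 0 (a j) := by
  rw [setOf_forall_pos_lt_eq_pi, closure_pi_set]
  exact pi_congr rfl fun j _ => closure_Ioo (ha j).ne

lemma exists_pos_le_le_two_mul {ι : Type*} [Finite ι] {a : ι → ℝ} (ha : ∀ j, 0 < a j)
    (hcomp : ∀ j k, a j ≤ 2 * a k) : ∃ c, 0 < c ∧ ∀ j, c ≤ a j ∧ a j ≤ 2 * c := by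
  cases isEmpty_or_nonempty ι
  · exact ⟨1, one_pos, isEmptyElim⟩
  · obtain ⟨k, hk⟩ := Finite.exists_min a
    exact ⟨a k, ha k, fun j => ⟨hk j, hcomp j k⟩⟩

def edgeStart (a c : ℝ) (b : Bool) : ℝ :=
  bif b then 0 else a - c

lemma Ioo_edgeStart_subset {a c : ℝ} (hca : c ≤ a) (b : Bool) :
    Ioo (edgeStart a c b) (edgeStart a c b + c) ⊆ Ioo 0 a := by
  cases b <;> simp only [edgeStart, cond_true, cond_false] <;>
    exact Ioo_subset_Ioo (by linarith) (by linarith)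

lemma iUnion_Icc_edgeStart {a c : ℝ} (hca : c ≤ a) (hac : a ≤ 2 * c) :
    ⋃ b, Icc (edgeStart a c b) (edgeStart a c b + c) = Icc 0 a := by
  have hpair : ⋃ b, Icc (edgeStart a c b) (edgeStart a c b + c) = Icc 0 c ∪ Icc (a - c) a := by
    rw [union_eq_iUnion]
    congr! with b
    cases b <;> simp [edgeStart]
  rw [hpair, Icc_union_Icc' (by linarith) (by linarith), min_eq_left (by linarith),
    max_eq_right hca]

lemma iUnion_pi_Icc_edgeStart {ι : Type*} {a : ι → ℝ} {c : ℝ}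
    (hc : ∀ j, c ≤ a j ∧ a j ≤ 2 * c) :
    ⋃ f : ι → Bool, univ.pi (fun j => Icc (edgeStart (a j) c (f j)) (edgeStart (a j) c (f j) + c))
      = univ.pi fun j => Icc 0 (a j) :=
  (iUnion_univ_pi fun j b => Icc (edgeStart (a j) c b) (edgeStart (a j) c b + c)).trans
    (pi_congr rfl fun j _ => iUnion_Icc_edgeStart (hc j).1 (hc j).2)

/-- a rectangle `P = (0,a₁)×⋯×(0,a_n)` with `1/2 ≤ a_j/a_k ≤ 2` for all `j,k`
coincides with the union of the closures of at most `2^n` open subcubes of `P`, whose covering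
multiplicity does not exceed `2^n`. -/
theorem rectangle_union_of_cubes (n : ℕ) (a : Fin n → ℝ) (ha : ∀ j, 0 < a j)
    (hcomp : ∀ j k, a j ≤ 2 * a k) :
    ∃ (N : ℕ) (z : Fin N → (Fin n → ℝ)) (c : Fin N → ℝ),
      N ≤ 2 ^ n ∧
      (∀ i, 0 < c i) ∧
      (∀ i, openCubePi n (z i) (c i) ⊆ {x | ∀ j, 0 < x j ∧ x j < a j}) ∧
      closure {x : Fin n → ℝ | ∀ j, 0 < x j ∧ x j < a j}
        = ⋃ i, closure (openCubePi n (z i) (c i)) ∧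
      ∀ x : Fin n → ℝ, Nat.card {i : Fin N // x ∈ openCubePi n (z i) (c i)} ≤ 2 ^ n := by
  obtain ⟨c, hc, hca⟩ := exists_pos_le_le_two_mul ha hcomp
  let e := Fintype.equivFin (Fin n → Bool)
  have hN : Fintype.card (Fin n → Bool) ≤ 2 ^ n := by simp
  refine ⟨_, fun i j => edgeStart (a j) c (e.symm i j), fun _ => c, hN, fun _ => hc,
    fun i => ?_, ?_, fun x => (Finite.card_subtype_le _).trans (by simp)⟩
  · rw [openCubePi_eq_pi, setOf_forall_pos_lt_eq_pi]
    exact pi_mono fun j _ => Ioo_edgeStart_subset (hca j).1 _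
  · simp_rw [closure_setOf_forall_pos_lt ha, closure_openCubePi _ _ hc]
    rw [e.symm.surjective.iUnion_comp
      (fun f => univ.pi fun j => Icc (edgeStart (a j) c (f j)) (edgeStart (a j) c (f j) + c))]
    exact (iUnion_pi_Icc_edgeStart hca).symm
end
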